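/- Let G be a group with a filtration G_• of degree at most s, and let g ∈ poly(Z, G_•) satisfy the stronger condition that ∂_{h_i}⋯∂_{h_1} g(n) ∈ G_{i+1} for all i ≥ 0 and all h₁,…,h_i, n ∈ Z. Then every Taylor coefficient g_i of g lies in G_{i+1}. -/

import Mathlib

/-!
Induct on `i`. Truncate the filtration at `i + 1`, i.e. replace `G_j` by `G_{min j (i+1)}`.
For `j ≠ i` the factor `n ↦ c_j ^ C(n, j)` is then polynomial for the shifted filtration
(by induction for `j < i`, since `c_j ∈ G_j ⊆ G_{i+1}` for `j > i`), so conjugating the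
factor `u n = c_i ^ C(n, i)` to the right writes `g = P * u` with `P` of shifted class.
Since `∂(Q v) = ∂Q ⁅Q, ∂v⁆ ∂v`, the `i`-th derivative of `P * u` is `Q * ∂ⁱ u` with `Q`
taking values in `G_{i+1}`, and `∂ⁱ u (0) = c_i`; as `∂ⁱ g (0) ∈ G_{i+1}`, so is `c_i`.
-/

/-- The discrete derivative `∂_h g (n) = g(n+h) g(n)⁻¹`. -/
def discDeriv {G : Type*} [Group G] (h : ℤ) (g : ℤ → G) : ℤ → G :=
  fun n => g (n + h) * (g n)⁻¹

/-- `g : ℤ → G` is a polynomial sequence adapted to `Gf` if every iterated discrete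
derivative of order `i` takes values in `Gf i`. -/
def IsPolySeq {G : Type*} [Group G] (Gf : ℕ → Subgroup G) (g : ℤ → G) : Prop :=
  ∀ (hs : List ℤ) (n : ℤ), (hs.foldr discDeriv g) n ∈ Gf hs.length

/-- The binomial coefficient `C(n, k)` for an integer `n` (the division is exact). -/
def zchoose (n : ℤ) (k : ℕ) : ℤ :=
  (∏ i ∈ Finset.range k, (n - (i : ℤ))) / (k.factorial : ℤ)

open scoped commutatorElement

theorem zchoose_eq_choose (n : ℤ) (k : ℕ) : zchoose n k = Ring.choose n k := by
  rw [zchoose, ← descPochhammer_eval_eq_prod_range, Polynomial.eval_eq_smeval,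
    Ring.descPochhammer_eq_factorial_smul_choose, nsmul_eq_mul,
    Int.mul_ediv_cancel_left _ (by positivity)]

section DiscDeriv

variable {G : Type*} [Group G]

theorem foldr_replicate_discDeriv (k : ℕ) (h : ℤ) (g : ℤ → G) :
    (List.replicate k h).foldr discDeriv g = (discDeriv h)^[k] g := by
  induction k with
  | zero => rfl
  | succ k ih => rw [List.replicate_succ, List.foldr_cons, ih, Function.iterate_succ_apply']

theorem discDeriv_mul (h : ℤ) (Q v : ℤ → G) :
    discDeriv h (fun n => Q n * v n) =
      fun n => discDeriv h Q n * ⁅Q n, discDeriv h v n⁆ * discDeriv h v n := by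
  funext n
  simp only [discDeriv, commutatorElement_def]
  group

theorem discDeriv_zpow_zchoose_succ (x : G) (j : ℕ) :
    discDeriv 1 (fun n => x ^ zchoose n (j + 1)) = fun n => x ^ zchoose n j := by
  funext n
  simp only [discDeriv, zchoose_eq_choose, Ring.choose_succ_succ, ← zpow_neg, ← zpow_add]
  congr 1
  ring

theorem iterate_discDeriv_zpow_zchoose (x : G) (j : ℕ) :
    (discDeriv 1)^[j] (fun n => x ^ zchoose n j) = fun _ => x := by
  induction j with
  | zero => funext n; simp [zchoose_eq_choose]
  | succ j ih => rw [Function.iterate_succ_apply, discDeriv_zpow_zchoose_succ, ih]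

end DiscDeriv

structure IsGroupFiltration {G : Type*} [Group G] (Gf : ℕ → Subgroup G) : Prop where
  one_eq_top : Gf 1 = ⊤
  succ_le : ∀ i, Gf (i + 1) ≤ Gf i
  commutator_le : ∀ i j, ⁅Gf i, Gf j⁆ ≤ Gf (i + j)

namespace IsGroupFiltration

variable {G : Type*} [Group G] {Gf : ℕ → Subgroup G}

theorem antitone (hGf : IsGroupFiltration Gf) : Antitone Gf :=
  antitone_nat_of_succ_le hGf.succ_le

theorem commutator_mem (hGf : IsGroupFiltration Gf) {i j : ℕ} {x y : G} (hx : x ∈ Gf i)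
    (hy : y ∈ Gf j) : ⁅x, y⁆ ∈ Gf (i + j) :=
  hGf.commutator_le i j (Subgroup.commutator_mem_commutator hx hy)

theorem conj_mem (hGf : IsGroupFiltration Gf) {i : ℕ} (y : G) {x : G} (hx : x ∈ Gf i) :
    y * x * y⁻¹ ∈ Gf i := by
  have hy : y ∈ Gf 1 := hGf.one_eq_top ▸ Subgroup.mem_top y
  rw [show y * x * y⁻¹ = ⁅y, x⁆ * x by group]
  exact mul_mem (hGf.antitone (Nat.le_add_left i 1) (hGf.commutator_mem hy hx)) hx

theorem truncate (hGf : IsGroupFiltration Gf) (N : ℕ) :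
    IsGroupFiltration (fun j => Gf (min j (N + 1))) where
  one_eq_top := by simpa using hGf.one_eq_top
  succ_le i := hGf.antitone (by omega)
  commutator_le i j :=
    (hGf.commutator_le _ _).trans (hGf.antitone (by omega))

end IsGroupFiltration

/-- Sequences built from binomial powers `n ↦ x ^ C(n, j)` with `x ∈ Gf (m + j)`. The class
is closed under `discDeriv 1` (raising `m` by one), which stands in for the Lazard–Leibman
theorem. -/
inductive IsPolyExpr {G : Type*} [Group G] (Gf : ℕ → Subgroup G) : ℕ → (ℤ → G) → Prop
  | pow {m j : ℕ} (x : G) (hx : x ∈ Gf (m + j)) : IsPolyExpr Gf m (fun n => x ^ zchoose n j)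
  | mul {m : ℕ} {f g : ℤ → G} (hf : IsPolyExpr Gf m f) (hg : IsPolyExpr Gf m g) :
      IsPolyExpr Gf m (fun n => f n * g n)
  | inv {m : ℕ} {f : ℤ → G} (hf : IsPolyExpr Gf m f) : IsPolyExpr Gf m (fun n => (f n)⁻¹)
  | conj {m : ℕ} {φ f : ℤ → G} (hφ : IsPolyExpr Gf 0 φ) (hf : IsPolyExpr Gf m f) :
      IsPolyExpr Gf m (fun n => φ n * f n * (φ n)⁻¹)
  | commutator {m₁ m₂ : ℕ} {f g : ℤ → G} (hf : IsPolyExpr Gf m₁ f) (hg : IsPolyExpr Gf m₂ g) :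
      IsPolyExpr Gf (m₁ + m₂) (fun n => ⁅f n, g n⁆)
  | weaken {m m' : ℕ} {f : ℤ → G} (hf : IsPolyExpr Gf m f) (hle : m' ≤ m) : IsPolyExpr Gf m' f

namespace IsPolyExpr

variable {G : Type*} [Group G] {Gf : ℕ → Subgroup G}

theorem one (m : ℕ) : IsPolyExpr Gf m (fun _ => 1) := by
  convert pow (m := m) (j := 0) (1 : G) (one_mem _) using 1
  simp

theorem mem (hGf : IsGroupFiltration Gf) {m : ℕ} {f : ℤ → G} (hf : IsPolyExpr Gf m f) (n : ℤ) :
    f n ∈ Gf m := by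
  induction hf generalizing n with
  | pow x hx => exact hGf.antitone (Nat.le_add_right _ _) (Subgroup.zpow_mem _ hx _)
  | mul _ _ ihf ihg => exact mul_mem (ihf n) (ihg n)
  | inv _ ihf => exact inv_mem (ihf n)
  | conj _ _ _ ihf => exact hGf.conj_mem _ (ihf n)
  | commutator _ _ ihf ihg => exact hGf.commutator_mem (ihf n) (ihg n)
  | weaken _ hle ihf => exact hGf.antitone hle (ihf n)

theorem discDeriv {m : ℕ} {f : ℤ → G} (hf : IsPolyExpr Gf m f) :
    IsPolyExpr Gf (m + 1) (discDeriv 1 f) := by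
  induction hf with
  | @pow m j x hx =>
    cases j with
    | zero => convert one (m + 1) using 1; funext n; simp [_root_.discDeriv, zchoose_eq_choose]
    | succ j =>
      rw [discDeriv_zpow_zchoose_succ]
      exact pow x (by convert hx using 2; omega)
  | @mul m f g hf hg ihf ihg =>
    -- `f (n + 1) = discDeriv 1 f n * f n`, and similarly below for `φ`
    have hf' : IsPolyExpr Gf 0 (fun n => _root_.discDeriv 1 f n * f n) :=
      (mul (ihf.weaken (by omega)) hf).weaken (by omega)
    convert mul (conj hf' ihg) ihf using 1
    funext n; simp only [_root_.discDeriv]; group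
  | @inv m f hf ihf =>
    convert conj ((inv hf).weaken (Nat.zero_le _)) (inv ihf) using 1
    funext n; simp only [_root_.discDeriv]; group
  | @conj m φ f hφ hf ihφ ihf =>
    -- `ψ n = (φ n)⁻¹ * φ (n + 1)`
    have hψ : IsPolyExpr Gf 1
        (fun n => (φ n)⁻¹ * _root_.discDeriv 1 φ n * ((φ n)⁻¹)⁻¹) :=
      conj (inv hφ) ihφ
    convert conj hφ (mul (conj (hψ.weaken (Nat.zero_le _)) ihf)
      ((commutator hψ hf).weaken (by omega))) using 1
    funext n; simp only [_root_.discDeriv, commutatorElement_def]; group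
  | @commutator m₁ m₂ f g hf hg ihf ihg =>
    have ha := ihf.weaken (m' := 0) (Nat.zero_le _)
    have hb := ihg.weaken (m' := 0) (Nat.zero_le _)
    have h₁ := (conj ha (commutator hf ihg)).weaken (m' := m₁ + m₂ + 1) (by omega)
    have h₂ := (commutator (mul (ihf.weaken (m' := 1) (by omega)) (ihg.weaken (by omega)))
      (commutator hf hg)).weaken (m' := m₁ + m₂ + 1) (by omega)
    have h₃ := conj ((commutator hf hg).weaken (Nat.zero_le _))
      (mul ((commutator ihf ihg).weaken (m' := m₁ + m₂ + 1) (by omega))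
        ((conj hb (commutator ihf hg)).weaken (by omega)))
    convert mul h₁ (mul h₂ h₃) using 1
    funext n; simp only [_root_.discDeriv, commutatorElement_def]; group
  | weaken _ hle ihf => exact ihf.weaken (by omega)

theorem iterate_discDeriv {m : ℕ} {f : ℤ → G} (hf : IsPolyExpr Gf m f) (k : ℕ) :
    IsPolyExpr Gf (m + k) ((_root_.discDeriv 1)^[k] f) := by
  induction k with
  | zero => exact hf
  | succ k ih => rw [Function.iterate_succ_apply']; exact ih.discDeriv

theorem exists_iterate_discDeriv_mul {P u : ℤ → G} (hP : IsPolyExpr Gf 1 P)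
    (hu : IsPolyExpr Gf 0 u) (k : ℕ) :
    ∃ Q, IsPolyExpr Gf (k + 1) Q ∧
      (_root_.discDeriv 1)^[k] (fun n => P n * u n) =
        fun n => Q n * (_root_.discDeriv 1)^[k] u n := by
  induction k with
  | zero => exact ⟨P, hP, rfl⟩
  | succ k ih =>
    obtain ⟨Q, hQ, hQu⟩ := ih
    refine ⟨_, mul hQ.discDeriv ((commutator hQ (hu.iterate_discDeriv (k + 1))).weaken
      (by omega)), ?_⟩
    rw [Function.iterate_succ_apply', hQu, discDeriv_mul,
      ← Function.iterate_succ_apply' (_root_.discDeriv 1) k u]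

theorem exists_list_prod_eq_mul_pow {α : Type*} [DecidableEq α] {F : α → ℤ → G} {a₀ : α}
    (hu : IsPolyExpr Gf 0 (F a₀)) :
    ∀ l : List α, (∀ a ∈ l, a ≠ a₀ → IsPolyExpr Gf 1 (F a)) →
      ∃ P, IsPolyExpr Gf 1 P ∧ ∀ n, (l.map fun a => F a n).prod = P n * F a₀ n ^ l.count a₀
  | [], _ => ⟨_, one 1, fun n => by simp⟩
  | a :: l, hF => by
    obtain ⟨P, hP, hl⟩ := exists_list_prod_eq_mul_pow hu l fun b hb => hF b (.tail a hb)
    by_cases ha : a = a₀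
    · subst ha
      refine ⟨_, conj hu hP, fun n => ?_⟩
      simp only [List.map_cons, List.prod_cons, hl, List.count_cons_self]
      group
    · refine ⟨_, mul (hF a (.head l) ha) hP, fun n => ?_⟩
      simp only [List.map_cons, List.prod_cons, hl, List.count_cons_of_ne ha, mul_assoc]

end IsPolyExpr

theorem taylor_coeffs_of_shifted_poly_general {G : Type*} [Group G] (s : ℕ)
    (Gf : ℕ → Subgroup G)
    (h1 : Gf 1 = ⊤)
    (hmono : ∀ i, Gf (i + 1) ≤ Gf i)
    (hcomm : ∀ i j, ⁅Gf i, Gf j⁆ ≤ Gf (i + j))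
    (g : ℤ → G)
    (hshift : IsPolySeq (fun i => Gf (i + 1)) g)
    (c : Fin (s + 1) → G) (hc : ∀ i, c i ∈ Gf i.val)
    (hexp : ∀ n : ℤ,
      g n = ((List.finRange (s + 1)).map (fun i => c i ^ zchoose n i.val)).prod) :
    ∀ i, c i ∈ Gf (i.val + 1) := by
  intro i
  induction i using Fin.strong_induction_on with | h i ih
  set Gi : ℕ → Subgroup G := fun j => Gf (min j (i.val + 1))
  have hGf : IsGroupFiltration Gf := ⟨h1, hmono, hcomm⟩
  have hGi : IsGroupFiltration Gi := hGf.truncate i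
  set u : ℤ → G := fun n => c i ^ zchoose n i.val
  have hu : IsPolyExpr Gi 0 u := .pow (c i) (by simpa [Gi] using hc i)
  obtain ⟨P, hP, hgP⟩ := IsPolyExpr.exists_list_prod_eq_mul_pow
      (F := fun j n => c j ^ zchoose n j.val) hu (List.finRange (s + 1)) fun j _ hj => by
    refine .pow (c j) (show c j ∈ Gf (min (1 + j.val) (i.val + 1)) from ?_)
    rcases lt_or_gt_of_ne hj with hlt | hlt
    · exact (show j.val + 1 = min (1 + j.val) (i.val + 1) by omega) ▸ ih j hlt
    · exact (show i.val + 1 = min (1 + j.val) (i.val + 1) by omega) ▸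
        hGf.antitone (show i.val + 1 ≤ j.val by omega) (hc j)
  have hsplit : g = fun n => P n * u n := by
    funext n
    rw [hexp, hgP, List.count_eq_one_of_mem (List.nodup_finRange _) (List.mem_finRange i),
      pow_one]
  obtain ⟨Q, hQ, hQu⟩ := hP.exists_iterate_discDeriv_mul hu i
  have hgi := hshift (List.replicate i 1) 0
  rw [List.length_replicate, foldr_replicate_discDeriv, hsplit, hQu,
    iterate_discDeriv_zpow_zchoose] at hgi
  have hQ0 : Q 0 ∈ Gf (i + 1) := by simpa [Gi] using hQ.mem hGi 0
  simpa using mul_mem (inv_mem hQ0) hgi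

/-- if all iterated derivatives of order `i` of `g` land in `G_{i+1}`,
then each Taylor coefficient `gᵢ` of `g` lies in `G_{i+1}`. -/
theorem taylor_coeffs_of_shifted_poly {G : Type*} [Group G] (s : ℕ)
    (Gf : ℕ → Subgroup G)
    (h0 : Gf 0 = ⊤) (h1 : Gf 1 = ⊤)
    (hmono : ∀ i, Gf (i + 1) ≤ Gf i)
    (hbot : ∀ i, s < i → Gf i = ⊥)
    (hcomm : ∀ i j, ⁅Gf i, Gf j⁆ ≤ Gf (i + j))
    (g : ℤ → G) (hg : IsPolySeq Gf g)
    (hshift : IsPolySeq (fun i => Gf (i + 1)) g)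
    (c : Fin (s + 1) → G) (hc : ∀ i, c i ∈ Gf i.val)
    (hexp : ∀ n : ℤ,
      g n = ((List.finRange (s + 1)).map (fun i => c i ^ zchoose n i.val)).prod) :
    ∀ i, c i ∈ Gf (i.val + 1) :=
  taylor_coeffs_of_shifted_poly_general s Gf h1 hmono hcomm g hshift c hc hexp
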